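/- For positive definite Hermitian matrices A and B, the quantity d(A,B)² := tr(A) + tr(B) - 2·tr((B^{1/2} A B^{1/2})^{1/2}) is nonnegative, and it is zero if and only if A = B. -/

import Mathlib

open Matrix
open scoped ComplexOrder

/-- The square root of a positive semidefinite matrix, as defined in Mathlib (Dec 2024)
as `Matrix.PosSemidef.sqrt`; removed from Mathlib since. -/
noncomputable def Matrix.PosSemidef.sqrt {n 𝕜 : Type*} [Fintype n] [DecidableEq n] [RCLike 𝕜]
    {A : Matrix n n 𝕜} (hA : A.PosSemidef) : Matrix n n 𝕜 :=
  (hA.1.eigenvectorUnitary : Matrix n n 𝕜) * diagonal ((↑) ∘ (√·) ∘ hA.1.eigenvalues : n → 𝕜) *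
    (star hA.1.eigenvectorUnitary : Matrix n n 𝕜)

/-! With `X = A^{1/2}`, `Y = B^{1/2}` and `C = (YAY)^{1/2}` we have `C² = (XY)ᴴ(XY)`, so the polar
decomposition gives a unitary `U` with `Uᴴ(XY) = C`. Expanding the Frobenius norm,
`tr A + tr B - 2 Re tr C = ‖X - UY‖²`, which is nonnegative and vanishes only if `X = UY`,
and then `A = XᴴX = YUᴴUY = B`. -/

namespace Matrix

variable {m n 𝕜 : Type*} [Fintype m] [Fintype n] [RCLike 𝕜]

lemma re_trace_conjTranspose_mul_self_nonneg (D : Matrix m n 𝕜) :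
    0 ≤ RCLike.re (Dᴴ * D).trace :=
  (RCLike.nonneg_iff.mp (posSemidef_conjTranspose_mul_self D).trace_nonneg).1

lemma re_trace_conjTranspose_mul_self_eq_zero_iff (D : Matrix m n 𝕜) :
    RCLike.re (Dᴴ * D).trace = 0 ↔ D = 0 := by
  rw [← trace_conjTranspose_mul_self_eq_zero_iff, RCLike.ext_iff (K := 𝕜)]
  simp [(RCLike.nonneg_iff.mp (posSemidef_conjTranspose_mul_self D).trace_nonneg).2]

variable [DecidableEq n]

section Sqrt

open scoped MatrixOrder

variable {A B : Matrix n n 𝕜}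

lemma PosSemidef.sqrt_eq_cfcSqrt (hA : A.PosSemidef) : hA.sqrt = CFC.sqrt A := by
  rw [CFC.sqrt_eq_cfc, cfc_nnreal_eq_real _ A, hA.1.cfc_eq]
  simp only [IsHermitian.cfc, Real.coe_sqrt, Real.coe_toNNReal', PosSemidef.sqrt,
    Unitary.conjStarAlgAut_apply]
  congr 3
  funext i
  simp [hA.eigenvalues_nonneg i]

lemma PosSemidef.isHermitian_sqrt (hA : A.PosSemidef) : hA.sqrt.IsHermitian := by
  rw [hA.sqrt_eq_cfcSqrt]
  exact (CFC.sqrt_nonneg A).posSemidef.isHermitian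

lemma PosSemidef.sqrt_mul_self (hA : A.PosSemidef) : hA.sqrt * hA.sqrt = A := by
  rw [hA.sqrt_eq_cfcSqrt]
  exact CFC.sqrt_mul_sqrt_self A hA.nonneg

lemma PosSemidef.sqrt_eq_of_mul_self_eq (hA : A.PosSemidef) (hB : B.PosSemidef)
    (h : B * B = A) : hA.sqrt = B := by
  rw [hA.sqrt_eq_cfcSqrt, ← h, ← sq, CFC.sqrt_sq B hB.nonneg]

lemma PosDef.isUnit_sqrt (hA : A.PosDef) : IsUnit hA.posSemidef.sqrt :=
  isUnit_mul_self_iff.mp <| by rw [hA.posSemidef.sqrt_mul_self]; exact hA.isUnit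

end Sqrt

lemma exists_unitary_conjTranspose_mul_eq {M C : Matrix n n 𝕜} (hM : IsUnit M)
    (hC : C.IsHermitian) (hCC : C * C = Mᴴ * M) :
    ∃ U : Matrix n n 𝕜, Uᴴ * U = 1 ∧ Uᴴ * M = C := by
  have hCunit : IsUnit C.det :=
    (isUnit_iff_isUnit_det C).mp <| isUnit_mul_self_iff.mp <| hCC ▸ hM.star.mul hM
  have hUM : (M * C⁻¹)ᴴ * M = C := by
    rw [conjTranspose_mul, conjTranspose_nonsing_inv, hC.eq, mul_assoc, ← hCC,
      nonsing_inv_mul_cancel_left _ _ hCunit]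
  refine ⟨M * C⁻¹, ?_, hUM⟩
  rw [← mul_assoc, hUM, mul_nonsing_inv _ hCunit]

lemma re_trace_conjTranspose_mul_sub_mul {U : Matrix n n 𝕜} (hU : Uᴴ * U = 1)
    (P Q : Matrix n n 𝕜) :
    RCLike.re ((P - U * Q)ᴴ * (P - U * Q)).trace =
      RCLike.re (Pᴴ * P).trace + RCLike.re (Qᴴ * Q).trace
        - 2 * RCLike.re (Uᴴ * (P * Qᴴ)).trace := by
  have hQ : (Qᴴ * Uᴴ * P).trace = (Uᴴ * (P * Qᴴ)).trace := by
    rw [mul_assoc, trace_mul_comm, mul_assoc]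
  have hP : (Pᴴ * (U * Q)).trace = star (Uᴴ * (P * Qᴴ)).trace := by
    rw [← hQ, ← trace_conjTranspose]
    simp only [conjTranspose_mul, conjTranspose_conjTranspose, mul_assoc]
  have hexpand :
      (P - U * Q)ᴴ * (P - U * Q) = Pᴴ * P + Qᴴ * Q - Pᴴ * (U * Q) - Qᴴ * Uᴴ * P := by
    rw [conjTranspose_sub, conjTranspose_mul, sub_mul, mul_sub, mul_sub,
      show Qᴴ * Uᴴ * (U * Q) = Qᴴ * Q by rw [mul_assoc, ← mul_assoc Uᴴ, hU, one_mul]]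
    abel
  rw [hexpand, trace_sub, trace_sub, trace_add, hQ, hP]
  simp only [map_sub, map_add, RCLike.star_def, RCLike.conj_re]
  ring

end Matrix

theorem hellinger_nonneg_eq_zero_iff (n : ℕ)
    (A B : Matrix (Fin n) (Fin n) ℂ) (hA : A.PosDef) (hB : B.PosDef)
    (hS : (hB.posSemidef.sqrt * A * hB.posSemidef.sqrt).PosSemidef) :
    0 ≤ A.trace.re + B.trace.re - 2 * hS.sqrt.trace.re ∧
      (A.trace.re + B.trace.re - 2 * hS.sqrt.trace.re = 0 ↔ A = B) := by
  set X := hA.posSemidef.sqrt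
  set Y := hB.posSemidef.sqrt
  have hX : Xᴴ * X = A := by rw [hA.posSemidef.isHermitian_sqrt.eq, hA.posSemidef.sqrt_mul_self]
  have hY : Yᴴ = Y := hB.posSemidef.isHermitian_sqrt.eq
  have hYY : Y * Y = B := hB.posSemidef.sqrt_mul_self
  obtain ⟨U, hU, hUC⟩ := exists_unitary_conjTranspose_mul_eq (M := X * Y)
    (hA.isUnit_sqrt.mul hB.isUnit_sqrt) hS.isHermitian_sqrt <| by
      rw [hS.sqrt_mul_self, conjTranspose_mul, hY, ← hX]
      simp only [mul_assoc]
  have hdist : A.trace.re + B.trace.re - 2 * hS.sqrt.trace.re =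
      RCLike.re ((X - U * Y)ᴴ * (X - U * Y)).trace := by
    rw [re_trace_conjTranspose_mul_sub_mul hU, hX, hY, hYY, hUC]
    simp only [RCLike.re_to_complex]
  refine ⟨hdist ▸ re_trace_conjTranspose_mul_self_nonneg _, ⟨fun h => ?_, fun hAB => ?_⟩⟩
  · rw [hdist, re_trace_conjTranspose_mul_self_eq_zero_iff, sub_eq_zero] at h
    rw [← hX, h, conjTranspose_mul, hY, mul_assoc, ← mul_assoc Uᴴ, hU, one_mul, hYY]
  · have hC : hS.sqrt = B := hS.sqrt_eq_of_mul_self_eq hB.posSemidef <| calc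
      B * B = Y * (Y * Y) * Y := by rw [← hYY]; simp only [mul_assoc]
      _ = Y * A * Y := by rw [hYY, hAB]
    rw [hC, hAB]
    ring
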